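/- arXiv:2512.16258 — 3 statements merged into one kernel-verified Lean document; each statement's English description precedes it below -/
import Mathlib

section
/- Extra symmetry for equal diffusivities d₁ = d₃ (Theorem 2, finite form of the operator (u+w)∂_w): Suppose d₁ = d₃ and (u, v, w) solves the system S(Ψ; d₁,d₂,d₁; k) on an open set Ω ⊆ ℝ³. Then for every real ε, the triple (u, v, e^ε·w + (e^ε − 1)·u) also solves S(Ψ; d₁,d₂,d₁; k) on Ω. -/
/-- Partial derivative with respect to `t` of a function of `(t,x,y)`. -/
noncomputable def pdT (f : ℝ × ℝ × ℝ → ℝ) (p : ℝ × ℝ × ℝ) : ℝ := fderiv ℝ f p (1, 0, 0)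
/-- Partial derivative with respect to `x`. -/
noncomputable def pdX (f : ℝ × ℝ × ℝ → ℝ) (p : ℝ × ℝ × ℝ) : ℝ := fderiv ℝ f p (0, 1, 0)
/-- Partial derivative with respect to `y`. -/
noncomputable def pdY (f : ℝ × ℝ × ℝ → ℝ) (p : ℝ × ℝ × ℝ) : ℝ := fderiv ℝ f p (0, 0, 1)
/-- `Ψ_x` for a function of `(x,y)`. -/
noncomputable def psiX (Ψ : ℝ × ℝ → ℝ) (q : ℝ × ℝ) : ℝ := fderiv ℝ Ψ q (1, 0)
/-- `Ψ_y` for a function of `(x,y)`. -/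
noncomputable def psiY (Ψ : ℝ × ℝ → ℝ) (q : ℝ × ℝ) : ℝ := fderiv ℝ Ψ q (0, 1)

/-- `(u,v,w)` solves the convective Lotka–Volterra system `S(Ψ; d₁,d₂,d₃; k)` on `Ω`. -/
def SolvesS (Ψ : ℝ × ℝ → ℝ) (d₁ d₂ d₃ k : ℝ) (u v w : ℝ × ℝ × ℝ → ℝ)
    (Ω : Set (ℝ × ℝ × ℝ)) : Prop :=
  ∀ p ∈ Ω,
    (pdT u p + psiY Ψ p.2 * pdX u p - psiX Ψ p.2 * pdY u p
      = d₁ * (pdX (pdX u) p + pdY (pdY u) p) - k * u p * v p) ∧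
    (pdT v p + psiY Ψ p.2 * pdX v p - psiX Ψ p.2 * pdY v p
      = d₂ * (pdX (pdX v) p + pdY (pdY v) p) - k * u p * v p) ∧
    (pdT w p + psiY Ψ p.2 * pdX w p - psiX Ψ p.2 * pdY w p
      = d₃ * (pdX (pdX w) p + pdY (pdY w) p) + k * u p * v p)


section LinearCombination

variable {E : Type*} [NormedAddCommGroup E] [NormedSpace ℝ E]

lemma fderiv_linComb_apply {f g : E → ℝ} {p : E} (hf : DifferentiableAt ℝ f p)
    (hg : DifferentiableAt ℝ g p) (a b : ℝ) (m : E) :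
    fderiv ℝ (fun q => a * f q + b * g q) p m = a * fderiv ℝ f p m + b * fderiv ℝ g p m := by
  rw [fderiv_fun_add (hf.const_mul a) (hg.const_mul b), fderiv_const_mul hf,
    fderiv_const_mul hg]
  simp

lemma ContDiff.differentiable_fderiv_apply {F : Type*} [NormedAddCommGroup F]
    [NormedSpace ℝ F] {f : E → F} (hf : ContDiff ℝ 2 f) (m : E) :
    Differentiable ℝ (fun p => fderiv ℝ f p m) :=
  ((hf.fderiv_right (by norm_num)).clm_apply contDiff_const).differentiable one_ne_zero

end LinearCombination

section PartialDerivatives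

variable {f g : ℝ × ℝ × ℝ → ℝ} (a b : ℝ)

lemma pdT_linComb (hf : Differentiable ℝ f) (hg : Differentiable ℝ g) :
    pdT (fun q => a * f q + b * g q) = fun q => a * pdT f q + b * pdT g q :=
  funext fun q => fderiv_linComb_apply (hf q) (hg q) a b _

lemma pdX_linComb (hf : Differentiable ℝ f) (hg : Differentiable ℝ g) :
    pdX (fun q => a * f q + b * g q) = fun q => a * pdX f q + b * pdX g q :=
  funext fun q => fderiv_linComb_apply (hf q) (hg q) a b _

lemma pdY_linComb (hf : Differentiable ℝ f) (hg : Differentiable ℝ g) :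
    pdY (fun q => a * f q + b * g q) = fun q => a * pdY f q + b * pdY g q :=
  funext fun q => fderiv_linComb_apply (hf q) (hg q) a b _

noncomputable def advectionDiffusion (Ψ : ℝ × ℝ → ℝ) (d : ℝ) (f : ℝ × ℝ × ℝ → ℝ)
    (p : ℝ × ℝ × ℝ) : ℝ :=
  pdT f p + psiY Ψ p.2 * pdX f p - psiX Ψ p.2 * pdY f p - d * (pdX (pdX f) p + pdY (pdY f) p)

lemma advectionDiffusion_linComb (Ψ : ℝ × ℝ → ℝ) (d : ℝ) (hf : ContDiff ℝ 2 f)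
    (hg : ContDiff ℝ 2 g) (p : ℝ × ℝ × ℝ) :
    advectionDiffusion Ψ d (fun q => a * f q + b * g q) p
      = a * advectionDiffusion Ψ d f p + b * advectionDiffusion Ψ d g p := by
  have hf₁ : Differentiable ℝ f := hf.differentiable (by norm_num)
  have hg₁ : Differentiable ℝ g := hg.differentiable (by norm_num)
  have hfx : Differentiable ℝ (pdX f) := hf.differentiable_fderiv_apply _
  have hgx : Differentiable ℝ (pdX g) := hg.differentiable_fderiv_apply _
  have hfy : Differentiable ℝ (pdY f) := hf.differentiable_fderiv_apply _
  have hgy : Differentiable ℝ (pdY g) := hg.differentiable_fderiv_apply _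
  simp only [advectionDiffusion, pdT_linComb a b hf₁ hg₁, pdX_linComb a b hf₁ hg₁,
    pdY_linComb a b hf₁ hg₁, pdX_linComb a b hfx hgx, pdY_linComb a b hfy hgy]
  ring

end PartialDerivatives

theorem extra_symmetry_d1_eq_d3_general
    (d₁ d₂ k : ℝ) (Ψ : ℝ × ℝ → ℝ)
    (Ω : Set (ℝ × ℝ × ℝ))
    (u v w : ℝ × ℝ × ℝ → ℝ)
    (hu : ContDiff ℝ 2 u) (hw : ContDiff ℝ 2 w)
    (h : SolvesS Ψ d₁ d₂ d₁ k u v w Ω) :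
    ∀ ε : ℝ,
      SolvesS Ψ d₁ d₂ d₁ k u v
        (fun p => Real.exp ε * w p + (Real.exp ε - 1) * u p) Ω := by
  intro ε p hp
  obtain ⟨hu_eq, hv_eq, hw_eq⟩ := h p hp
  refine ⟨hu_eq, hv_eq, ?_⟩
  -- `u` and `w` share the operator, and the reaction terms `∓ k u v` combine with weights
  -- `e^ε` and `e^ε − 1` to `(e^ε − (e^ε − 1)) k u v = k u v`.
  have hlin := advectionDiffusion_linComb (Real.exp ε) (Real.exp ε - 1) Ψ d₁ hw hu p
  simp only [advectionDiffusion] at hlin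
  linear_combination hlin + Real.exp ε * hw_eq + (Real.exp ε - 1) * hu_eq

/-- Extra symmetry for equal diffusivities `d₁ = d₃` (finite form of `(u+w)∂_w`):
if `(u,v,w)` solves `S(Ψ; d₁,d₂,d₁; k)` on an open set `Ω`, then for every real `ε`
the triple `(u, v, e^ε·w + (e^ε − 1)·u)` also solves `S(Ψ; d₁,d₂,d₁; k)` on `Ω`. -/
theorem extra_symmetry_d1_eq_d3
    (d₁ d₂ k : ℝ) (Ψ : ℝ × ℝ → ℝ) (hΨ : ContDiff ℝ 1 Ψ)
    (Ω : Set (ℝ × ℝ × ℝ)) (hΩ : IsOpen Ω)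
    (u v w : ℝ × ℝ × ℝ → ℝ)
    (hu : ContDiff ℝ 2 u) (hv : ContDiff ℝ 2 v) (hw : ContDiff ℝ 2 w)
    (h : SolvesS Ψ d₁ d₂ d₁ k u v w Ω) :
    ∀ ε : ℝ,
      SolvesS Ψ d₁ d₂ d₁ k u v
        (fun p => Real.exp ε * w p + (Real.exp ε - 1) * u p) Ω :=
  extra_symmetry_d1_eq_d3_general d₁ d₂ k Ψ Ω u v w hu hw h
end

section
/- Trigonometric exact solution of system (2-23): Let d₁, d₂, d₃ be real constants with d₃ ≠ 0, and let α₁, α₂, C₁, C₂, C₃, C₄ be real constants. Define ψ(t,x,y) = C₁ + C₂·((α₁x + α₂y)·sin 2t + (α₁y − α₂x)·cos 2t). On the open set Ω = {(t,x,y) ∈ ℝ³ : cos ψ(t,x,y) ≠ 0}, the functions u = 6d₂(α₁² + α₂²)C₂²·sec²ψ, v = 2d₁(α₁² + α₂²)C₂²·(−2 + 3sec²ψ), w = ((α₁² + α₂²)/d₃)·(−6d₁d₂C₂²·sec²ψ + C₃·(α₁x + α₂y)·sin 2t + C₃·(α₁y − α₂x)·cos 2t + C₄) satisfy system (2-23):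 u_t + 2y u_x − 2x u_y = d₁(u_xx + u_yy) − uv, v_t + 2y v_x − 2x v_y = d₂(v_xx + v_yy) − uv, w_t + 2y w_x − 2x w_y = d₃(w_xx + w_yy) + uv, at every point of Ω. -/
/-- `(u,v,w)` solves system (2-23), the convective Lotka–Volterra system with
stream function `Ψ = x² + y²` and `k = 1`, on `Ω`. -/
def Solves223 (d₁ d₂ d₃ : ℝ) (u v w : ℝ × ℝ × ℝ → ℝ) (Ω : Set (ℝ × ℝ × ℝ)) : Prop :=
  ∀ p ∈ Ω,
    (pdT u p + 2 * p.2.2 * pdX u p - 2 * p.2.1 * pdY u p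
      = d₁ * (pdX (pdX u) p + pdY (pdY u) p) - u p * v p) ∧
    (pdT v p + 2 * p.2.2 * pdX v p - 2 * p.2.1 * pdY v p
      = d₂ * (pdX (pdX v) p + pdY (pdY v) p) - u p * v p) ∧
    (pdT w p + 2 * p.2.2 * pdX w p - 2 * p.2.1 * pdY w p
      = d₃ * (pdX (pdX w) p + pdY (pdY w) p) + u p * v p)

/-- The phase `ψ(t,x,y) = C₁ + C₂·((α₁x + α₂y)·sin 2t + (α₁y − α₂x)·cos 2t)`. -/
noncomputable def psi (α₁ α₂ C₁ C₂ : ℝ) (p : ℝ × ℝ × ℝ) : ℝ :=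
  C₁ + C₂ * ((α₁ * p.2.1 + α₂ * p.2.2) * Real.sin (2 * p.1)
    + (α₁ * p.2.2 - α₂ * p.2.1) * Real.cos (2 * p.1))

open Real

section DirectionalDerivatives

variable {E : Type*} [NormedAddCommGroup E] [NormedSpace ℝ E] {p : E}

theorem fderiv_comp_apply_eq_deriv_mul {g : ℝ → ℝ} {φ : E → ℝ}
    (hg : DifferentiableAt ℝ g (φ p)) (hφ : DifferentiableAt ℝ φ p) (v : E) :
    fderiv ℝ (fun q => g (φ q)) p v = deriv g (φ p) * fderiv ℝ φ p v := by
  rw [fderiv_fun_comp p hg hφ, ContinuousLinearMap.comp_apply, ← fderiv_apply_one_eq_deriv,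
    mul_comm, ← smul_eq_mul, ← map_smul, smul_eq_mul, mul_one]

theorem ContDiffAt.differentiableAt_fderiv_apply {f : E → ℝ} (hf : ContDiffAt ℝ 2 f p)
    (v : E) : DifferentiableAt ℝ (fun q => fderiv ℝ f q v) p :=
  ((hf.fderiv_right (m := 1) le_rfl).differentiableAt one_ne_zero).clm_apply
    (differentiableAt_const v)

theorem fderiv_fderiv_add_apply {f₁ f₂ : E → ℝ} (h₁ : ContDiffAt ℝ 2 f₁ p)
    (h₂ : ContDiffAt ℝ 2 f₂ p) (v w : E) :
    fderiv ℝ (fun q => fderiv ℝ (f₁ + f₂) q v) p w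
      = fderiv ℝ (fun q => fderiv ℝ f₁ q v) p w + fderiv ℝ (fun q => fderiv ℝ f₂ q v) p w := by
  have hnear : (fun q => fderiv ℝ (f₁ + f₂) q v)
      =ᶠ[nhds p] (fun q => fderiv ℝ f₁ q v) + (fun q => fderiv ℝ f₂ q v) := by
    filter_upwards [h₁.eventually (by simp), h₂.eventually (by simp)] with q hq₁ hq₂
    rw [fderiv_add (hq₁.differentiableAt two_ne_zero) (hq₂.differentiableAt two_ne_zero)]
    rfl
  rw [hnear.fderiv_eq, fderiv_add (h₁.differentiableAt_fderiv_apply v)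
    (h₂.differentiableAt_fderiv_apply v)]
  rfl

theorem fderiv_fderiv_comp_apply {g : ℝ → ℝ} {φ : E → ℝ} (hg : ContDiffAt ℝ 2 g (φ p))
    (hφ : ContDiffAt ℝ 2 φ p) (v : E) :
    fderiv ℝ (fun q => fderiv ℝ (fun r => g (φ r)) q v) p v
      = deriv (deriv g) (φ p) * fderiv ℝ φ p v ^ 2
        + deriv g (φ p) * fderiv ℝ (fun q => fderiv ℝ φ q v) p v := by
  have hg' : ContDiffAt ℝ 1 (deriv g) (φ p) := hg.derivWithin le_rfl
  have hnear : (fun q => fderiv ℝ (fun r => g (φ r)) q v)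
      =ᶠ[nhds p] fun q => deriv g (φ q) * fderiv ℝ φ q v := by
    filter_upwards [hφ.eventually (by simp),
      hφ.continuousAt.eventually (hg.eventually (by simp))] with q hφq hgq
    exact fderiv_comp_apply_eq_deriv_mul (hgq.differentiableAt two_ne_zero)
      (hφq.differentiableAt two_ne_zero) v
  have hd : DifferentiableAt ℝ (fun q => deriv g (φ q)) p :=
    (hg'.differentiableAt one_ne_zero).comp p (hφ.differentiableAt two_ne_zero)
  rw [hnear.fderiv_eq, fderiv_fun_mul hd (hφ.differentiableAt_fderiv_apply v)]
  simp only [add_apply, smul_apply, smul_eq_mul]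
  rw [fderiv_comp_apply_eq_deriv_mul (hg'.differentiableAt one_ne_zero)
    (hφ.differentiableAt two_ne_zero)]
  ring

end DirectionalDerivatives

noncomputable def convectiveDeriv (f : ℝ × ℝ × ℝ → ℝ) (p : ℝ × ℝ × ℝ) : ℝ :=
  pdT f p + 2 * p.2.2 * pdX f p - 2 * p.2.1 * pdY f p

noncomputable def laplacianXY (f : ℝ × ℝ × ℝ → ℝ) (p : ℝ × ℝ × ℝ) : ℝ :=
  pdX (pdX f) p + pdY (pdY f) p

theorem solves223_iff {d₁ d₂ d₃ : ℝ} {u v w : ℝ × ℝ × ℝ → ℝ} {Ω : Set (ℝ × ℝ × ℝ)} :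
    Solves223 d₁ d₂ d₃ u v w Ω ↔ ∀ p ∈ Ω,
      convectiveDeriv u p = d₁ * laplacianXY u p - u p * v p ∧
      convectiveDeriv v p = d₂ * laplacianXY v p - u p * v p ∧
      convectiveDeriv w p = d₃ * laplacianXY w p + u p * v p :=
  Iff.rfl

section Operators

variable {f₁ f₂ φ : ℝ × ℝ × ℝ → ℝ} {g : ℝ → ℝ} {p : ℝ × ℝ × ℝ}

theorem convectiveDeriv_add (h₁ : DifferentiableAt ℝ f₁ p) (h₂ : DifferentiableAt ℝ f₂ p) :
    convectiveDeriv (f₁ + f₂) p = convectiveDeriv f₁ p + convectiveDeriv f₂ p := by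
  simp only [convectiveDeriv, pdT, pdX, pdY, fderiv_add h₁ h₂, add_apply]
  ring

theorem convectiveDeriv_comp (hg : DifferentiableAt ℝ g (φ p)) (hφ : DifferentiableAt ℝ φ p) :
    convectiveDeriv (fun q => g (φ q)) p = deriv g (φ p) * convectiveDeriv φ p := by
  simp only [convectiveDeriv, pdT, pdX, pdY, fderiv_comp_apply_eq_deriv_mul hg hφ]
  ring

theorem laplacianXY_add (h₁ : ContDiffAt ℝ 2 f₁ p) (h₂ : ContDiffAt ℝ 2 f₂ p) :
    laplacianXY (f₁ + f₂) p = laplacianXY f₁ p + laplacianXY f₂ p := by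
  unfold laplacianXY pdX pdY
  rw [fderiv_fderiv_add_apply h₁ h₂, fderiv_fderiv_add_apply h₁ h₂]
  ring

theorem laplacianXY_comp (hg : ContDiffAt ℝ 2 g (φ p)) (hφ : ContDiffAt ℝ 2 φ p) :
    laplacianXY (fun q => g (φ q)) p
      = deriv (deriv g) (φ p) * (pdX φ p ^ 2 + pdY φ p ^ 2)
        + deriv g (φ p) * laplacianXY φ p := by
  unfold laplacianXY pdX pdY
  rw [fderiv_fderiv_comp_apply hg hφ, fderiv_fderiv_comp_apply hg hφ]
  ring

end Operators

section Phase

variable (α₁ α₂ C₁ C₂ : ℝ)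

theorem contDiff_psi {n : WithTop ℕ∞} : ContDiff ℝ n (psi α₁ α₂ C₁ C₂) := by
  unfold psi
  fun_prop

theorem fderiv_psi_apply (q v : ℝ × ℝ × ℝ) :
    fderiv ℝ (psi α₁ α₂ C₁ C₂) q v
      = C₂ * ((α₁ * v.2.1 + α₂ * v.2.2) * sin (2 * q.1)
          + (α₁ * v.2.2 - α₂ * v.2.1) * cos (2 * q.1)
          + 2 * v.1 * ((α₁ * q.2.1 + α₂ * q.2.2) * cos (2 * q.1)
            - (α₁ * q.2.2 - α₂ * q.2.1) * sin (2 * q.1))) := by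
  unfold psi
  simp (disch := fun_prop) only [fderiv_const_add, fderiv_fun_mul, fderiv_fun_add, fderiv_sin,
    fderiv.fst, fderiv_fun_id, ContinuousLinearMap.comp_id, fderiv_fun_const, Pi.zero_apply,
    smul_zero, add_zero, fderiv.snd, smul_add, fderiv_cos, neg_smul, smul_neg, fderiv_fun_sub,
    add_apply, smul_apply, ContinuousLinearMap.coe_fst', smul_eq_mul,
    ContinuousLinearMap.comp_apply, ContinuousLinearMap.coe_snd', neg_apply, sub_apply]
  ring

theorem pdX_psi :
    pdX (psi α₁ α₂ C₁ C₂) = fun q => C₂ * (α₁ * sin (2 * q.1) - α₂ * cos (2 * q.1)) := by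
  ext q
  simp only [pdX, fderiv_psi_apply]
  ring

theorem pdY_psi :
    pdY (psi α₁ α₂ C₁ C₂) = fun q => C₂ * (α₂ * sin (2 * q.1) + α₁ * cos (2 * q.1)) := by
  ext q
  simp only [pdY, fderiv_psi_apply]
  ring

theorem convectiveDeriv_psi (p : ℝ × ℝ × ℝ) : convectiveDeriv (psi α₁ α₂ C₁ C₂) p = 0 := by
  simp only [convectiveDeriv, pdT, fderiv_psi_apply, pdX_psi, pdY_psi]
  ring

theorem laplacianXY_psi (p : ℝ × ℝ × ℝ) : laplacianXY (psi α₁ α₂ C₁ C₂) p = 0 := by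
  rw [laplacianXY, pdX_psi, pdY_psi]
  simp (disch := fun_prop) [pdX, pdY, fderiv_fun_mul, fderiv_fun_sub, fderiv_fun_add, fderiv.fst]

theorem pdX_psi_sq_add_pdY_psi_sq (p : ℝ × ℝ × ℝ) :
    pdX (psi α₁ α₂ C₁ C₂) p ^ 2 + pdY (psi α₁ α₂ C₁ C₂) p ^ 2
      = C₂ ^ 2 * (α₁ ^ 2 + α₂ ^ 2) := by
  rw [pdX_psi, pdY_psi]
  linear_combination C₂ ^ 2 * (α₁ ^ 2 + α₂ ^ 2) * sin_sq_add_cos_sq (2 * p.1)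

end Phase

section SecantSquared

variable {s : ℝ}

theorem contDiffAt_const_mul_inv_cos_sq (a : ℝ) {n : WithTop ℕ∞} (hs : cos s ≠ 0) :
    ContDiffAt ℝ n (fun s => a * (cos s)⁻¹ ^ 2) s := by
  fun_prop (disch := exact hs)

theorem hasDerivAt_inv_cos_sq (hs : cos s ≠ 0) :
    HasDerivAt (fun s => (cos s)⁻¹ ^ 2) (2 * sin s * (cos s)⁻¹ ^ 3) s := by
  refine (((hasDerivAt_cos s).fun_inv hs).fun_pow 2).congr_deriv ?_
  norm_num
  field_simp

theorem hasDerivAt_sin_mul_inv_cos_cube (hs : cos s ≠ 0) :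
    HasDerivAt (fun s => 2 * sin s * (cos s)⁻¹ ^ 3)
      (6 * (cos s)⁻¹ ^ 4 - 4 * (cos s)⁻¹ ^ 2) s := by
  refine (((hasDerivAt_sin s).const_mul 2).mul
    (((hasDerivAt_cos s).fun_inv hs).fun_pow 3)).congr_deriv ?_
  norm_num
  field_simp
  linear_combination 6 * sin_sq_add_cos_sq s

theorem deriv_deriv_const_mul_inv_cos_sq (a : ℝ) (hs : cos s ≠ 0) :
    deriv (deriv fun s => a * (cos s)⁻¹ ^ 2) s
      = a * (6 * (cos s)⁻¹ ^ 4 - 4 * (cos s)⁻¹ ^ 2) := by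
  have hnear :
      deriv (fun s => (cos s)⁻¹ ^ 2) =ᶠ[nhds s] fun s => 2 * sin s * (cos s)⁻¹ ^ 3 := by
    filter_upwards [continuous_cos.continuousAt.eventually_ne hs] with t ht
    exact (hasDerivAt_inv_cos_sq ht).deriv
  simp only [deriv_const_mul_field', hnear.deriv_eq,
    (hasDerivAt_sin_mul_inv_cos_cube hs).deriv]

end SecantSquared

def IsSecSqProfile (α₁ α₂ C₁ C₂ a : ℝ) (f : ℝ × ℝ × ℝ → ℝ) : Prop :=
  ∃ C₁' C₂', ∀ q, f q = a * (cos (psi α₁ α₂ C₁ C₂ q))⁻¹ ^ 2 + psi α₁ α₂ C₁' C₂' q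

namespace IsSecSqProfile

variable {α₁ α₂ C₁ C₂ a : ℝ} {f : ℝ × ℝ × ℝ → ℝ} {p : ℝ × ℝ × ℝ}

theorem convectiveDeriv_eq_zero (hf : IsSecSqProfile α₁ α₂ C₁ C₂ a f)
    (hp : cos (psi α₁ α₂ C₁ C₂ p) ≠ 0) : convectiveDeriv f p = 0 := by
  obtain ⟨C₁', C₂', hf⟩ := hf
  obtain rfl : f = (fun q => a * (cos (psi α₁ α₂ C₁ C₂ q))⁻¹ ^ 2) + psi α₁ α₂ C₁' C₂' :=
    funext hf
  have hg := (contDiffAt_const_mul_inv_cos_sq a hp (n := 1)).differentiableAt one_ne_zero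
  have hψ (C₁ C₂ : ℝ) : DifferentiableAt ℝ (psi α₁ α₂ C₁ C₂) p :=
    (contDiff_psi α₁ α₂ C₁ C₂ (n := 1)).differentiable one_ne_zero p
  have hgψ : DifferentiableAt ℝ (fun q => a * (cos (psi α₁ α₂ C₁ C₂ q))⁻¹ ^ 2) p :=
    hg.comp p (hψ C₁ C₂)
  rw [convectiveDeriv_add hgψ (hψ C₁' C₂'), convectiveDeriv_comp hg (hψ C₁ C₂),
    convectiveDeriv_psi, convectiveDeriv_psi, mul_zero, add_zero]

theorem laplacianXY_eq (hf : IsSecSqProfile α₁ α₂ C₁ C₂ a f)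
    (hp : cos (psi α₁ α₂ C₁ C₂ p) ≠ 0) :
    laplacianXY f p = a * (C₂ ^ 2 * (α₁ ^ 2 + α₂ ^ 2))
      * (6 * (cos (psi α₁ α₂ C₁ C₂ p))⁻¹ ^ 4 - 4 * (cos (psi α₁ α₂ C₁ C₂ p))⁻¹ ^ 2) := by
  obtain ⟨C₁', C₂', hf⟩ := hf
  obtain rfl : f = (fun q => a * (cos (psi α₁ α₂ C₁ C₂ q))⁻¹ ^ 2) + psi α₁ α₂ C₁' C₂' :=
    funext hf
  have hg := contDiffAt_const_mul_inv_cos_sq a hp (n := 2)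
  have hψ (C₁ C₂ : ℝ) : ContDiffAt ℝ 2 (psi α₁ α₂ C₁ C₂) p :=
    (contDiff_psi α₁ α₂ C₁ C₂).contDiffAt
  have hgψ : ContDiffAt ℝ 2 (fun q => a * (cos (psi α₁ α₂ C₁ C₂ q))⁻¹ ^ 2) p :=
    hg.comp p (hψ C₁ C₂)
  rw [laplacianXY_add hgψ (hψ C₁' C₂'), laplacianXY_comp hg (hψ C₁ C₂), laplacianXY_psi,
    laplacianXY_psi, pdX_psi_sq_add_pdY_psi_sq, deriv_deriv_const_mul_inv_cos_sq a hp]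
  ring

end IsSecSqProfile

/-- Trigonometric exact solution of system (2-23): on `Ω = {cos ψ ≠ 0}` the functions
`u = 6d₂(α₁²+α₂²)C₂² sec²ψ`, `v = 2d₁(α₁²+α₂²)C₂²(−2+3sec²ψ)`,
`w = ((α₁²+α₂²)/d₃)(−6d₁d₂C₂² sec²ψ + C₃(α₁x+α₂y)sin 2t + C₃(α₁y−α₂x)cos 2t + C₄)`
solve system (2-23). -/
theorem trigonometric_exact_solution
    (d₁ d₂ d₃ α₁ α₂ C₁ C₂ C₃ C₄ : ℝ) (hd₃ : d₃ ≠ 0) :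
    Solves223 d₁ d₂ d₃
      (fun p => 6 * d₂ * (α₁ ^ 2 + α₂ ^ 2) * C₂ ^ 2 *
        ((Real.cos (psi α₁ α₂ C₁ C₂ p))⁻¹) ^ 2)
      (fun p => 2 * d₁ * (α₁ ^ 2 + α₂ ^ 2) * C₂ ^ 2 *
        (-2 + 3 * ((Real.cos (psi α₁ α₂ C₁ C₂ p))⁻¹) ^ 2))
      (fun p => ((α₁ ^ 2 + α₂ ^ 2) / d₃) *
        (-(6 * d₁ * d₂ * C₂ ^ 2) * ((Real.cos (psi α₁ α₂ C₁ C₂ p))⁻¹) ^ 2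
          + C₃ * (α₁ * p.2.1 + α₂ * p.2.2) * Real.sin (2 * p.1)
          + C₃ * (α₁ * p.2.2 - α₂ * p.2.1) * Real.cos (2 * p.1) + C₄))
      {p : ℝ × ℝ × ℝ | Real.cos (psi α₁ α₂ C₁ C₂ p) ≠ 0} := by
  rw [solves223_iff]
  intro p (hp : cos (psi α₁ α₂ C₁ C₂ p) ≠ 0)
  -- Each named hole is shared by both rewrites, so the second one reuses the profile of the first.
  refine ⟨?_, ?_, ?_⟩
  · rw [IsSecSqProfile.convectiveDeriv_eq_zero (a := 6 * d₂ * (α₁ ^ 2 + α₂ ^ 2) * C₂ ^ 2) ?hu hp,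
      IsSecSqProfile.laplacianXY_eq ?hu hp]
    · ring
    · exact ⟨0, 0, fun q => by simp only [psi]; ring⟩
  · rw [IsSecSqProfile.convectiveDeriv_eq_zero (a := 6 * d₁ * (α₁ ^ 2 + α₂ ^ 2) * C₂ ^ 2) ?hv hp,
      IsSecSqProfile.laplacianXY_eq ?hv hp]
    · ring
    · exact ⟨-(4 * d₁ * (α₁ ^ 2 + α₂ ^ 2) * C₂ ^ 2), 0, fun q => by simp only [psi]; ring⟩
  · rw [IsSecSqProfile.convectiveDeriv_eq_zero
      (a := -((α₁ ^ 2 + α₂ ^ 2) / d₃ * (6 * d₁ * d₂ * C₂ ^ 2))) ?hw hp,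
      IsSecSqProfile.laplacianXY_eq ?hw hp]
    · field_simp
      ring
    · exact ⟨(α₁ ^ 2 + α₂ ^ 2) / d₃ * C₄, (α₁ ^ 2 + α₂ ^ 2) / d₃ * C₃,
        fun q => by simp only [psi]; ring⟩
end

section
/- Tanh-type exact solution of system (2-23) with equal diffusivities: Let d > 0 and α₁, α₂, C₂, C₃ be real constants; set C₁ = 10d(α₁² + α₂²) and θ(t,x,y) = C₁t + (α₁x + α₂y)·sin 2t + (α₁y − α₂x)·cos 2t. Then the functions u = (3C₁/5)·(1 + tanh θ)², v = −12C₁/5 + u, w = C₂ + C₃·exp(10θ) − u satisfy system (2-23) with d₁ = d₂ = d₃ = d, i.e. u_t + 2y u_x − 2x u_y = d(u_xx + u_yy) − uv, v_t + 2y v_x − 2x v_y = d(v_xx + v_yy) − uv, w_t + 2y w_x − 2x w_y = d(w_xx + w_yy) + uv, at every point of ℝ³. -/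
/-- The phase `θ(t,x,y) = C₁t + (α₁x + α₂y)·sin 2t + (α₁y − α₂x)·cos 2t`. -/
noncomputable def theta (α₁ α₂ C₁ : ℝ) (p : ℝ × ℝ × ℝ) : ℝ :=
  C₁ * p.1 + (α₁ * p.2.1 + α₂ * p.2.2) * Real.sin (2 * p.1)
    + (α₁ * p.2.2 - α₂ * p.2.1) * Real.cos (2 * p.1)

open Real

theorem Real.hasDerivAt_tanh (s : ℝ) : HasDerivAt tanh (1 - tanh s ^ 2) s := by
  have h : HasDerivAt (fun x => sinh x / cosh x) _ s :=
    (hasDerivAt_sinh s).div (hasDerivAt_cosh s) (cosh_pos s).ne'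
  simp only [← tanh_eq_sinh_div_cosh] at h
  refine h.congr_deriv ?_
  rw [tanh_eq_sinh_div_cosh]
  field_simp

section Calculus

variable {E : Type*} [NormedAddCommGroup E] [NormedSpace ℝ E]

theorem fderiv_comp_apply_of_hasDerivAt {F : ℝ → ℝ} {F' : ℝ} {g : E → ℝ} {p : E}
    (hF : HasDerivAt F F' (g p)) (hg : DifferentiableAt ℝ g p) (v : E) :
    fderiv ℝ (fun q => F (g q)) p v = F' * fderiv ℝ g p v := by
  change fderiv ℝ (F ∘ g) p v = _
  rw [(hF.comp_hasFDerivAt p hg.hasFDerivAt).fderiv]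
  rfl

theorem fderiv_mul_comp_fst_apply {f : ℝ × E → ℝ} {c : ℝ → ℝ} {p v : ℝ × E}
    (hf : DifferentiableAt ℝ f p) (hc : DifferentiableAt ℝ c p.1) (hv : v.1 = 0) :
    fderiv ℝ (fun q => f q * c q.1) p v = fderiv ℝ f p v * c p.1 := by
  have hc_fst : fderiv ℝ (fun q : ℝ × E => c q.1) p v = 0 := by
    rw [fderiv_comp_apply_of_hasDerivAt hc.hasDerivAt differentiableAt_fst, fderiv_fst]
    simp [hv]
  have hc' : DifferentiableAt ℝ (fun q : ℝ × E => c q.1) p := hc.comp p differentiableAt_fst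
  rw [fderiv_fun_mul hf hc']
  simp [hc_fst, mul_comm]

end Calculus

theorem hasDerivAt_two_mul (t : ℝ) : HasDerivAt (fun t : ℝ => 2 * t) 2 t := by
  simpa using (hasDerivAt_id t).const_mul 2

noncomputable section Phase

variable (α₁ α₂ C₁ : ℝ)

def gradThetaX (t : ℝ) : ℝ := α₁ * sin (2 * t) - α₂ * cos (2 * t)

def gradThetaY (t : ℝ) : ℝ := α₂ * sin (2 * t) + α₁ * cos (2 * t)

theorem gradThetaX_sq_add_gradThetaY_sq (t : ℝ) :
    gradThetaX α₁ α₂ t ^ 2 + gradThetaY α₁ α₂ t ^ 2 = α₁ ^ 2 + α₂ ^ 2 := by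
  unfold gradThetaX gradThetaY
  linear_combination (α₁ ^ 2 + α₂ ^ 2) * sin_sq_add_cos_sq (2 * t)

theorem hasDerivAt_gradThetaX (t : ℝ) :
    HasDerivAt (gradThetaX α₁ α₂) (2 * gradThetaY α₁ α₂ t) t :=
  ((((hasDerivAt_two_mul t).sin).const_mul α₁).sub
    (((hasDerivAt_two_mul t).cos).const_mul α₂)).congr_deriv (by unfold gradThetaY; ring)

theorem hasDerivAt_gradThetaY (t : ℝ) :
    HasDerivAt (gradThetaY α₁ α₂) (-2 * gradThetaX α₁ α₂ t) t :=
  ((((hasDerivAt_two_mul t).sin).const_mul α₂).add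
    (((hasDerivAt_two_mul t).cos).const_mul α₁)).congr_deriv (by unfold gradThetaX; ring)

theorem theta_eq :
    theta α₁ α₂ C₁ = fun p => C₁ * p.1 + gradThetaX α₁ α₂ p.1 * p.2.1
      + gradThetaY α₁ α₂ p.1 * p.2.2 := by
  funext p
  simp only [theta, gradThetaX, gradThetaY]
  ring

theorem differentiable_gradThetaX : Differentiable ℝ (gradThetaX α₁ α₂) :=
  fun t => (hasDerivAt_gradThetaX α₁ α₂ t).differentiableAt

theorem differentiable_gradThetaY : Differentiable ℝ (gradThetaY α₁ α₂) :=
  fun t => (hasDerivAt_gradThetaY α₁ α₂ t).differentiableAt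

theorem differentiable_theta : Differentiable ℝ (theta α₁ α₂ C₁) := by
  have := differentiable_gradThetaX α₁ α₂
  have := differentiable_gradThetaY α₁ α₂
  rw [theta_eq]
  fun_prop

theorem fderiv_theta_apply (p v : ℝ × ℝ × ℝ) :
    fderiv ℝ (theta α₁ α₂ C₁) p v
      = (C₁ + 2 * gradThetaY α₁ α₂ p.1 * p.2.1 - 2 * gradThetaX α₁ α₂ p.1 * p.2.2) * v.1
        + gradThetaX α₁ α₂ p.1 * v.2.1 + gradThetaY α₁ α₂ p.1 * v.2.2 := by
  have ht : HasFDerivAt (fun q : ℝ × ℝ × ℝ => q.1) (.fst ℝ ℝ (ℝ × ℝ)) p := hasFDerivAt_fst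
  have hs : HasFDerivAt (fun q : ℝ × ℝ × ℝ => q.2) (.snd ℝ ℝ (ℝ × ℝ)) p := hasFDerivAt_snd
  have hx := hs.fst
  have hy := hs.snd
  have hX := (hasDerivAt_gradThetaX α₁ α₂ p.1).comp_hasFDerivAt p ht
  have hY := (hasDerivAt_gradThetaY α₁ α₂ p.1).comp_hasFDerivAt p ht
  simp only [Function.comp_def] at hX hY
  rw [theta_eq, (((ht.const_mul C₁).fun_add (hX.fun_mul hx)).fun_add (hY.fun_mul hy)).fderiv]
  simp only [neg_mul, neg_smul, smul_neg, add_apply, smul_apply, ContinuousLinearMap.coe_fst',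
    smul_eq_mul, ContinuousLinearMap.comp_apply, ContinuousLinearMap.coe_snd', neg_apply]
  ring

variable {F F' F'' : ℝ → ℝ}

theorem convective_comp_theta (hF : ∀ s, HasDerivAt F (F' s) s) (p : ℝ × ℝ × ℝ) :
    pdT (fun q => F (theta α₁ α₂ C₁ q)) p + 2 * p.2.2 * pdX (fun q => F (theta α₁ α₂ C₁ q)) p
      - 2 * p.2.1 * pdY (fun q => F (theta α₁ α₂ C₁ q)) p = C₁ * F' (theta α₁ α₂ C₁ p) := by
  simp only [pdT, pdX, pdY,
    fderiv_comp_apply_of_hasDerivAt (hF _) (differentiable_theta α₁ α₂ C₁ p), fderiv_theta_apply]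
  ring

theorem pdX_comp_theta (hF : ∀ s, HasDerivAt F (F' s) s) :
    pdX (fun q => F (theta α₁ α₂ C₁ q))
      = fun q => F' (theta α₁ α₂ C₁ q) * gradThetaX α₁ α₂ q.1 := by
  funext q
  simp [pdX, fderiv_comp_apply_of_hasDerivAt (hF _) (differentiable_theta α₁ α₂ C₁ q),
    fderiv_theta_apply]

theorem pdY_comp_theta (hF : ∀ s, HasDerivAt F (F' s) s) :
    pdY (fun q => F (theta α₁ α₂ C₁ q))
      = fun q => F' (theta α₁ α₂ C₁ q) * gradThetaY α₁ α₂ q.1 := by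
  funext q
  simp [pdY, fderiv_comp_apply_of_hasDerivAt (hF _) (differentiable_theta α₁ α₂ C₁ q),
    fderiv_theta_apply]

theorem laplacian_comp_theta (hF : ∀ s, HasDerivAt F (F' s) s)
    (hF' : ∀ s, HasDerivAt F' (F'' s) s) (p : ℝ × ℝ × ℝ) :
    pdX (pdX (fun q => F (theta α₁ α₂ C₁ q))) p + pdY (pdY (fun q => F (theta α₁ α₂ C₁ q))) p
      = (α₁ ^ 2 + α₂ ^ 2) * F'' (theta α₁ α₂ C₁ p) := by
  have hF'θ : DifferentiableAt ℝ (fun q => F' (theta α₁ α₂ C₁ q)) p :=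
    (hF' _).differentiableAt.comp p (differentiable_theta α₁ α₂ C₁ p)
  rw [pdX_comp_theta α₁ α₂ C₁ hF, pdY_comp_theta α₁ α₂ C₁ hF]
  simp only [pdX, pdY,
    fderiv_mul_comp_fst_apply hF'θ (differentiable_gradThetaX α₁ α₂ _) (v := (0, 1, 0)) rfl,
    fderiv_mul_comp_fst_apply hF'θ (differentiable_gradThetaY α₁ α₂ _) (v := (0, 0, 1)) rfl,
    fderiv_comp_apply_of_hasDerivAt (hF' _) (differentiable_theta α₁ α₂ C₁ p), fderiv_theta_apply]
  linear_combination F'' (theta α₁ α₂ C₁ p) * gradThetaX_sq_add_gradThetaY_sq α₁ α₂ p.1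

end Phase

theorem hasDerivAt_one_add_tanh_sq (s : ℝ) :
    HasDerivAt (fun s => (1 + tanh s) ^ 2) (2 * (1 + tanh s) * (1 - tanh s ^ 2)) s :=
  (((hasDerivAt_tanh s).const_add 1).pow 2).congr_deriv (by push_cast; ring)

theorem hasDerivAt_deriv_one_add_tanh_sq (s : ℝ) :
    HasDerivAt (fun s => 2 * (1 + tanh s) * (1 - tanh s ^ 2))
      (2 * (1 - tanh s ^ 2) * (1 - 2 * tanh s - 3 * tanh s ^ 2)) s :=
  ((((hasDerivAt_tanh s).const_add 1).const_mul 2).fun_mul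
    (((hasDerivAt_tanh s).fun_pow 2).const_sub 1)).congr_deriv (by push_cast; ring)

theorem hasDerivAt_exp_ten_mul (s : ℝ) :
    HasDerivAt (fun s => exp (10 * s)) (10 * exp (10 * s)) s :=
  ((hasDerivAt_id s).const_mul 10).exp.congr_deriv (by simp [mul_comm])

theorem tanh_exact_solution_general
    (d α₁ α₂ C₂ C₃ : ℝ) :
    Solves223 d d d
      (fun p => (3 * (10 * d * (α₁ ^ 2 + α₂ ^ 2)) / 5) *
        (1 + Real.tanh (theta α₁ α₂ (10 * d * (α₁ ^ 2 + α₂ ^ 2)) p)) ^ 2)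
      (fun p => -(12 * (10 * d * (α₁ ^ 2 + α₂ ^ 2)) / 5)
        + (3 * (10 * d * (α₁ ^ 2 + α₂ ^ 2)) / 5) *
          (1 + Real.tanh (theta α₁ α₂ (10 * d * (α₁ ^ 2 + α₂ ^ 2)) p)) ^ 2)
      (fun p => C₂ + C₃ * Real.exp (10 * theta α₁ α₂ (10 * d * (α₁ ^ 2 + α₂ ^ 2)) p)
        - (3 * (10 * d * (α₁ ^ 2 + α₂ ^ 2)) / 5) *
          (1 + Real.tanh (theta α₁ α₂ (10 * d * (α₁ ^ 2 + α₂ ^ 2)) p)) ^ 2)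
      Set.univ := by
  intro p _
  set C₁ := 10 * d * (α₁ ^ 2 + α₂ ^ 2) with hC₁
  set A := 3 * C₁ / 5 with hA
  have hu := fun s => (hasDerivAt_one_add_tanh_sq s).const_mul A
  have hu' := fun s => (hasDerivAt_deriv_one_add_tanh_sq s).const_mul A
  have hv := fun s => (hu s).const_add (-(12 * C₁ / 5))
  have hw := fun s => (((hasDerivAt_exp_ten_mul s).const_mul C₃).const_add C₂).fun_sub (hu s)
  have hw' := fun s => (((hasDerivAt_exp_ten_mul s).const_mul 10).const_mul C₃).fun_sub (hu' s)
  refine ⟨?_, ?_, ?_⟩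
  · rw [convective_comp_theta α₁ α₂ C₁ hu, laplacian_comp_theta α₁ α₂ C₁ hu hu', hA, hC₁]
    ring
  · rw [convective_comp_theta α₁ α₂ C₁ hv, laplacian_comp_theta α₁ α₂ C₁ hv hu', hA, hC₁]
    ring
  · rw [convective_comp_theta α₁ α₂ C₁ hw, laplacian_comp_theta α₁ α₂ C₁ hw hw', hA, hC₁]
    ring

/-- Tanh-type exact solution of system (2-23) with `d₁ = d₂ = d₃ = d`:
with `C₁ = 10d(α₁²+α₂²)`, the functions `u = (3C₁/5)(1 + tanh θ)²`,
`v = −12C₁/5 + u`, `w = C₂ + C₃e^{10θ} − u` solve (2-23) on all of `ℝ³`. -/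
theorem tanh_exact_solution
    (d α₁ α₂ C₂ C₃ : ℝ) (hd : 0 < d) :
    Solves223 d d d
      (fun p => (3 * (10 * d * (α₁ ^ 2 + α₂ ^ 2)) / 5) *
        (1 + Real.tanh (theta α₁ α₂ (10 * d * (α₁ ^ 2 + α₂ ^ 2)) p)) ^ 2)
      (fun p => -(12 * (10 * d * (α₁ ^ 2 + α₂ ^ 2)) / 5)
        + (3 * (10 * d * (α₁ ^ 2 + α₂ ^ 2)) / 5) *
          (1 + Real.tanh (theta α₁ α₂ (10 * d * (α₁ ^ 2 + α₂ ^ 2)) p)) ^ 2)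
      (fun p => C₂ + C₃ * Real.exp (10 * theta α₁ α₂ (10 * d * (α₁ ^ 2 + α₂ ^ 2)) p)
        - (3 * (10 * d * (α₁ ^ 2 + α₂ ^ 2)) / 5) *
          (1 + Real.tanh (theta α₁ α₂ (10 * d * (α₁ ^ 2 + α₂ ^ 2)) p)) ^ 2)
      Set.univ :=
  tanh_exact_solution_general d α₁ α₂ C₂ C₃
end
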